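/- arXiv:2101.11688 — 8 statements merged into one kernel-verified Lean document; each statement's English description precedes it below -/
import Mathlib

section
/- Let m be an n×k real matrix. If the Hadamard extension H(m) has full column rank, then there is a set R of at most k−1 of the rows of m such that the Hadamard extension H(m|_R) of the restriction of m to the rows in R has full column rank. -/
/-
In a commutative algebra, let `W R` be the span of the products `∏_{i ∈ S} v i` over `S ⊆ R`.
If no single `i ∉ R` enlarges `W R`, then `W R` is stable under multiplication by every `v i`
with `i ∉ R`, so it contains every product and equals `W univ`. Hence, among the sets `R` with
`#R < dim W R` (`∅` is one, as `W ∅` is the line through `1`), one maximising `dim W R` already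
has `W R = W univ`. For the rows of `m`, `W univ` is the row space of `H(m)`, which is everything
when `H(m)` has full column rank, so `#R < k`.
-/

open Matrix

/-- The Hadamard extension of an `n × k` real matrix `m`: the `2^n × k` matrix whose
rows are indexed by subsets `S ⊆ {1,…,n}`, with entry `∏_{i ∈ S} m i j` in column `j`. -/
noncomputable def hext {n k : ℕ} (m : Matrix (Fin n) (Fin k) ℝ) :
    Matrix (Finset (Fin n)) (Fin k) ℝ :=
  fun S j => ∏ i ∈ S, m i j

/-- The Hadamard extension of the restriction of `m` to the rows in `R`:
rows are indexed by subsets `S ⊆ R`. -/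
noncomputable def hextRestrict {n k : ℕ} (m : Matrix (Fin n) (Fin k) ℝ) (R : Finset (Fin n)) :
    Matrix {S : Finset (Fin n) // S ⊆ R} (Fin k) ℝ :=
  fun S j => ∏ i ∈ S.1, m i j

open Finset Submodule Module

section Hadamard

variable (K : Type*) {A ι : Type*} [Field K] [CommRing A] [Algebra K A] (v : ι → A)

/-- For `v = m` (the rows of a matrix) this is the row space of `H(m|_R)`. -/
noncomputable def hadamardSpan (R : Finset ι) : Submodule K A :=
  span K ((fun S => ∏ i ∈ S, v i) '' R.powerset)

variable {K v}

instance (R : Finset ι) : FiniteDimensional K (hadamardSpan K v R) :=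
  FiniteDimensional.span_of_finite K (R.powerset.finite_toSet.image _)

theorem prod_mem_hadamardSpan {R S : Finset ι} (hS : S ⊆ R) :
    ∏ i ∈ S, v i ∈ hadamardSpan K v R :=
  subset_span ⟨S, mem_powerset.2 hS, rfl⟩

theorem hadamardSpan_mono {R R' : Finset ι} (h : R ⊆ R') :
    hadamardSpan K v R ≤ hadamardSpan K v R' :=
  span_mono (Set.image_mono (coe_subset.2 (powerset_mono.2 h)))

theorem hadamardSpan_empty : hadamardSpan K v ∅ = K ∙ 1 := by
  simp [hadamardSpan]

variable [DecidableEq ι]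

theorem mul_mem_hadamardSpan_insert {R : Finset ι} {i : ι} (hi : i ∉ R) {x : A}
    (hx : x ∈ hadamardSpan K v R) : v i * x ∈ hadamardSpan K v (insert i R) := by
  have hle : hadamardSpan K v R ≤
      (hadamardSpan K v (insert i R)).comap (LinearMap.mulLeft K (v i)) := span_le.2 <| by
    rintro _ ⟨S, hS, rfl⟩
    have hiS : i ∉ S := fun h => hi (mem_powerset.1 hS h)
    rw [SetLike.mem_coe, mem_comap, LinearMap.mulLeft_apply, ← prod_insert hiS]
    exact prod_mem_hadamardSpan (insert_subset_insert i (mem_powerset.1 hS))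
  exact hle hx

theorem prod_mem_hadamardSpan_of_forall_insert_le {R : Finset ι}
    (h : ∀ i ∉ R, hadamardSpan K v (insert i R) ≤ hadamardSpan K v R) (T : Finset ι) :
    ∏ i ∈ T, v i ∈ hadamardSpan K v R := by
  induction T using Finset.strongInduction with
  | H T ih =>
    by_cases hTR : T ⊆ R
    · exact prod_mem_hadamardSpan hTR
    obtain ⟨i, hiT, hiR⟩ := not_subset.1 hTR
    rw [← mul_prod_erase T v hiT]
    exact h i hiR (mul_mem_hadamardSpan_insert hiR (ih _ (erase_ssubset hiT)))

theorem hadamardSpan_le_of_forall_insert_le {R : Finset ι}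
    (h : ∀ i ∉ R, hadamardSpan K v (insert i R) ≤ hadamardSpan K v R) (R' : Finset ι) :
    hadamardSpan K v R' ≤ hadamardSpan K v R :=
  span_le.2 <| by
    rintro _ ⟨T, -, rfl⟩
    exact prod_mem_hadamardSpan_of_forall_insert_le h T

theorem exists_hadamardSpan_eq_univ_and_card_lt_finrank [Fintype ι] [Nontrivial A] :
    ∃ R : Finset ι, hadamardSpan K v R = hadamardSpan K v univ ∧
      #R < finrank K (hadamardSpan K v R) := by
  obtain ⟨R, hR, hmax⟩ := exists_max_image {R | #R < finrank K (hadamardSpan K v R)}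
    (fun R => finrank K (hadamardSpan K v R))
    ⟨∅, by
      rw [mem_filter_univ, card_empty, hadamardSpan_empty, finrank_span_singleton one_ne_zero]
      exact one_pos⟩
  have hcard := (mem_filter.1 hR).2
  refine ⟨R, le_antisymm (hadamardSpan_mono (subset_univ R)) ?_, hcard⟩
  refine hadamardSpan_le_of_forall_insert_le (fun i hi => ?_) univ
  by_contra hle
  have hlt := finrank_lt_finrank_of_lt
    ((hadamardSpan_mono (subset_insert i R)).lt_of_not_ge hle)
  have := hmax (insert i R) (mem_filter.2 ⟨mem_univ _, by rw [card_insert_of_notMem hi]; omega⟩)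
  omega

end Hadamard

theorem Matrix.linearIndependent_transpose_iff_span_eq_top {K ρ κ : Type*} [Field K]
    [Fintype ρ] [Fintype κ] (M : Matrix ρ κ K) :
    LinearIndependent K Mᵀ ↔ span K (Set.range M) = ⊤ := by
  change LinearIndependent K M.col ↔ span K (Set.range M.row) = ⊤
  rw [linearIndependent_iff_card_eq_finrank_span, Set.finrank, ← rank_eq_finrank_span_cols,
    rank_eq_finrank_span_row, Submodule.eq_top_iff_finrank_eq, finrank_fintype_fun_eq_card,
    eq_comm]

theorem span_range_hextRestrict {n k : ℕ} (m : Matrix (Fin n) (Fin k) ℝ) (R : Finset (Fin n)) :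
    span ℝ (Set.range (hextRestrict m R)) = hadamardSpan ℝ m R := by
  have hrows : hextRestrict m R = fun S => ∏ i ∈ S.1, m i :=
    funext fun S => funext fun j => (prod_apply j S.1 m).symm
  rw [hrows]
  unfold hadamardSpan
  congr 1
  ext x
  simp

theorem span_range_hext {n k : ℕ} (m : Matrix (Fin n) (Fin k) ℝ) :
    span ℝ (Set.range (hext m)) = hadamardSpan ℝ m univ := by
  have hrows : hext m = fun S => ∏ i ∈ S, m i :=
    funext fun S => funext fun j => (prod_apply j S m).symm
  rw [hrows]
  unfold hadamardSpan
  rw [powerset_univ, coe_univ, Set.image_univ]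

/-- If `H(m)` has full column rank, then there is a set `R` of at most `k - 1` rows of `m`
such that `H(m|_R)` has full column rank. -/
theorem hext_fullColRank_implies_restrict {n k : ℕ} (m : Matrix (Fin n) (Fin k) ℝ)
    (h : LinearIndependent ℝ (hext m)ᵀ) :
    ∃ R : Finset (Fin n), R.card ≤ k - 1 ∧
      LinearIndependent ℝ (hextRestrict m R)ᵀ := by
  rcases k.eq_zero_or_pos with rfl | hk
  · exact ⟨∅, le_rfl, linearIndependent_empty_type⟩
  have : NeZero k := ⟨hk.ne'⟩
  obtain ⟨R, hR, hcard⟩ := exists_hadamardSpan_eq_univ_and_card_lt_finrank (K := ℝ) (v := m)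
  rw [linearIndependent_transpose_iff_span_eq_top, span_range_hext, ← hR] at h
  rw [h, finrank_top, finrank_fin_fun] at hcard
  refine ⟨R, by omega, ?_⟩
  rw [linearIndependent_transpose_iff_span_eq_top, span_range_hextRestrict, h]
end

section
/- Let m be an n×k real matrix satisfying the NAE condition (i.e., ε̄(m) ≥ −1). Then there is a restriction of m to some set R of k−1 rows such that ε̄(m|_R) = −1. -/
open scoped Classical

/-- `naeRows m C` is the set of rows of `m` that are nonconstant on the columns in `C`. -/
noncomputable def naeRows {n k : ℕ} (m : Matrix (Fin n) (Fin k) ℝ) (C : Finset (Fin k)) :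
    Finset (Fin n) :=
  Finset.univ.filter (fun i => ∃ j ∈ C, ∃ j' ∈ C, m i j ≠ m i j')

/-- `eps m C = |NAE(m|^C)| - |C|`. -/
noncomputable def eps {n k : ℕ} (m : Matrix (Fin n) (Fin k) ℝ) (C : Finset (Fin k)) : ℤ :=
  (naeRows m C).card - C.card

/-- `epsRestrict m R C` is `ε` for the restriction of `m` to the rows in `R`:
`|NAE(m|_R|^C)| - |C|`. -/
noncomputable def epsRestrict {n k : ℕ} (m : Matrix (Fin n) (Fin k) ℝ) (R : Finset (Fin n))
    (C : Finset (Fin k)) : ℤ :=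
  (naeRows m C ∩ R).card - C.card

/-!
Replace `C ↦ NAE(m|^C)` by any monotone `N : Finset κ → Finset ι` with
`N (C ∪ D) ⊆ N C ∪ N D` whenever `C` and `D` meet (a row constant on both is then constant
on the union). `CountCondition N S` is the NAE condition for the rows `S`, and `C` is tight
when `ε(C) = -1`. Counting rows gives
`|N (C ∪ D) ∩ S| + |N (C ∩ D) ∩ S| ≤ |N C ∩ S| + |N D ∩ S|`, so intersecting tight sets have
a tight union and distinct maximal tight sets are disjoint. If no row of `S` can be dropped
without breaking the condition, every row lies in `N D` for a maximal tight `D`, and summing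
`|N D ∩ S| = |D| - 1` over these disjoint `D` gives `|S| < k`. So rows can be dropped one at
a time until `k - 1` remain, and a single column has `ε = -1`.
-/

open Finset

section CountCondition

variable {ι κ : Type*} [DecidableEq ι] (N : Finset κ → Finset ι)

def CountCondition (S : Finset ι) : Prop :=
  ∀ C : Finset κ, C.Nonempty → C.card ≤ (N C ∩ S).card + 1

def IsTight (S : Finset ι) (C : Finset κ) : Prop :=
  C.Nonempty ∧ (N C ∩ S).card + 1 = C.card

variable {N}

theorem IsTight.union [DecidableEq κ] (hmono : Monotone N)
    (hunion : ∀ C D, (C ∩ D).Nonempty → N (C ∪ D) ⊆ N C ∪ N D)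
    {S : Finset ι} (hS : CountCondition N S) {C D : Finset κ}
    (hC : IsTight N S C) (hD : IsTight N S D) (hCD : (C ∩ D).Nonempty) :
    IsTight N S (C ∪ D) := by
  obtain ⟨hCne, hCtight⟩ := hC
  obtain ⟨-, hDtight⟩ := hD
  have hne : (C ∪ D).Nonempty := hCne.mono subset_union_left
  have hU : N (C ∪ D) ∩ S ⊆ (N C ∩ S) ∪ (N D ∩ S) := by
    rw [← union_inter_distrib_right]
    exact inter_subset_inter_right (hunion C D hCD)
  have hI : N (C ∩ D) ∩ S ⊆ (N C ∩ S) ∩ (N D ∩ S) := by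
    rw [← inter_inter_distrib_right]
    exact inter_subset_inter_right
      (subset_inter (hmono inter_subset_left) (hmono inter_subset_right))
  have := card_union_add_card_inter (N C ∩ S) (N D ∩ S)
  have := card_union_add_card_inter C D
  have := card_le_card hU
  have := card_le_card hI
  have := hS _ hCD
  have := hS _ hne
  exact ⟨hne, by omega⟩

theorem exists_isTight_mem_of_not_countCondition_erase {S : Finset ι}
    (hS : CountCondition N S) {i : ι} (hi : i ∈ S) (hi' : ¬ CountCondition N (S.erase i)) :
    ∃ C, IsTight N S C ∧ i ∈ N C := by
  simp only [CountCondition, not_forall, not_le] at hi'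
  obtain ⟨C, hC, hlt⟩ := hi'
  have hle := hS C hC
  by_cases hiN : i ∈ N C
  · rw [inter_erase, card_erase_of_mem (mem_inter.2 ⟨hiN, hi⟩)] at hlt
    exact ⟨C, ⟨hC, by omega⟩, hiN⟩
  · rw [inter_erase, erase_eq_of_notMem fun h => hiN (mem_inter.1 h).1] at hlt
    omega

theorem disjoint_of_maximal_isTight [DecidableEq κ] (hmono : Monotone N)
    (hunion : ∀ C D, (C ∩ D).Nonempty → N (C ∪ D) ⊆ N C ∪ N D)
    {S : Finset ι} (hS : CountCondition N S) {C D : Finset κ}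
    (hC : Maximal (IsTight N S) C) (hD : Maximal (IsTight N S) D) (hCD : C ≠ D) :
    Disjoint C D := by
  by_contra hnd
  have hU := hC.prop.union hmono hunion hS hD.prop (not_disjoint_iff_nonempty_inter.1 hnd)
  exact hCD ((hC.eq_of_le hU subset_union_left).trans
    (hD.eq_of_le hU subset_union_right).symm)

theorem card_lt_of_forall_mem_isTight [Fintype κ] [DecidableEq κ] (hmono : Monotone N)
    (hunion : ∀ C D, (C ∩ D).Nonempty → N (C ∪ D) ⊆ N C ∪ N D)
    {S : Finset ι} (hS : CountCondition N S) (hSne : S.Nonempty)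
    (hcov : ∀ i ∈ S, ∃ C, IsTight N S C ∧ i ∈ N C) :
    S.card < Fintype.card κ := by
  set F := univ.filter (Maximal (IsTight N S))
  have hcover : S ⊆ F.biUnion (fun D => N D ∩ S) := by
    intro i hi
    obtain ⟨C, hC, hiC⟩ := hcov i hi
    obtain ⟨D, hCD, hD⟩ := Finite.exists_le_maximal hC
    exact mem_biUnion.2
      ⟨D, mem_filter.2 ⟨mem_univ D, hD⟩, mem_inter.2 ⟨hmono hCD hiC, hi⟩⟩
  have hFne : F.Nonempty := by
    obtain ⟨i, hi⟩ := hSne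
    obtain ⟨D, hD, -⟩ := mem_biUnion.1 (hcover hi)
    exact ⟨D, hD⟩
  have hdisj : (F : Set (Finset κ)).PairwiseDisjoint id := fun C hC D hD hCD =>
    disjoint_of_maximal_isTight hmono hunion hS (mem_filter.1 hC).2 (mem_filter.1 hD).2 hCD
  calc S.card + 1 ≤ ∑ D ∈ F, (N D ∩ S).card + F.card :=
        add_le_add ((card_le_card hcover).trans card_biUnion_le) (card_pos.2 hFne)
    _ = ∑ D ∈ F, D.card := by
        rw [card_eq_sum_ones, ← sum_add_distrib]
        exact sum_congr rfl fun D hD => (mem_filter.1 hD).2.prop.2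
    _ = (F.biUnion id).card := (card_biUnion hdisj).symm
    _ ≤ Fintype.card κ := card_le_univ _

theorem exists_countCondition_erase [Fintype κ] [DecidableEq κ] [Nonempty κ]
    (hmono : Monotone N)
    (hunion : ∀ C D, (C ∩ D).Nonempty → N (C ∪ D) ⊆ N C ∪ N D)
    {S : Finset ι} (hS : CountCondition N S) (hcard : Fintype.card κ ≤ S.card) :
    ∃ i ∈ S, CountCondition N (S.erase i) := by
  by_contra! hstuck
  have hSne : S.Nonempty := card_pos.1 (Fintype.card_pos.trans_le hcard)
  have := card_lt_of_forall_mem_isTight hmono hunion hS hSne fun i hi =>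
    exists_isTight_mem_of_not_countCondition_erase hS hi (hstuck i hi)
  omega

theorem exists_subset_card_eq_countCondition [Fintype κ] [DecidableEq κ] [Nonempty κ]
    (hmono : Monotone N)
    (hunion : ∀ C D, (C ∩ D).Nonempty → N (C ∪ D) ⊆ N C ∪ N D)
    {S : Finset ι} (hS : CountCondition N S) :
    ∃ R ⊆ S, R.card = Fintype.card κ - 1 ∧ CountCondition N R := by
  induction S using Finset.strongInduction with
  | H S ih =>
    have hle : Fintype.card κ ≤ S.card + 1 :=
      calc Fintype.card κ = (univ : Finset κ).card := card_univ.symm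
        _ ≤ (N univ ∩ S).card + 1 := hS univ univ_nonempty
        _ ≤ S.card + 1 := Nat.add_le_add_right (card_le_card inter_subset_right) 1
    by_cases hS' : S.card = Fintype.card κ - 1
    · exact ⟨S, subset_rfl, hS', hS⟩
    obtain ⟨i, hi, hSi⟩ := exists_countCondition_erase hmono hunion hS (by omega)
    obtain ⟨R, hRS, hR⟩ := ih _ (erase_ssubset hi) hSi
    exact ⟨R, hRS.trans (erase_subset i S), hR⟩

end CountCondition

section NAE

variable {n k : ℕ} (m : Matrix (Fin n) (Fin k) ℝ)

theorem naeRows_mono : Monotone (naeRows m) := by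
  intro C D hCD i
  simp only [naeRows, mem_filter, mem_univ, true_and]
  exact fun ⟨j, hj, j', hj', hne⟩ => ⟨j, hCD hj, j', hCD hj', hne⟩

theorem naeRows_union_subset {C D : Finset (Fin k)} (hCD : (C ∩ D).Nonempty) :
    naeRows m (C ∪ D) ⊆ naeRows m C ∪ naeRows m D := by
  obtain ⟨x, hx⟩ := hCD
  rw [mem_inter] at hx
  intro i
  simp only [naeRows, mem_union, mem_filter, mem_univ, true_and]
  contrapose!
  rintro ⟨hC, hD⟩ j hj j' hj'
  have hconst : ∀ a, a ∈ C ∨ a ∈ D → m i a = m i x := fun a ha =>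
    ha.elim (fun ha => hC a ha x hx.1) (fun ha => hD a ha x hx.2)
  rw [hconst j hj, hconst j' hj']

theorem naeRows_singleton (j : Fin k) : naeRows m {j} = ∅ := by
  ext i
  simp [naeRows]

theorem neg_one_le_epsRestrict_iff {R : Finset (Fin n)} {C : Finset (Fin k)} :
    -1 ≤ epsRestrict m R C ↔ C.card ≤ (naeRows m C ∩ R).card + 1 := by
  unfold epsRestrict
  omega

theorem eps_eq_epsRestrict_univ (C : Finset (Fin k)) : eps m C = epsRestrict m univ C := by
  rw [eps, epsRestrict, inter_univ]

end NAE

/-- If `m` satisfies the NAE condition (`ε̄(m) ≥ -1`, i.e. `ε(m|^C) ≥ -1` for every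
nonempty set of columns `C`), then there is a restriction of `m` to some set `R` of
`k - 1` rows such that `ε̄(m|_R) = -1`. -/
theorem nae_condition_restrict_to_rows {n k : ℕ} (hk : 0 < k)
    (m : Matrix (Fin n) (Fin k) ℝ)
    (h : ∀ C : Finset (Fin k), C.Nonempty → -1 ≤ eps m C) :
    ∃ R : Finset (Fin n), R.card = k - 1 ∧
      (∀ C : Finset (Fin k), C.Nonempty → -1 ≤ epsRestrict m R C) ∧
      (∃ C : Finset (Fin k), C.Nonempty ∧ epsRestrict m R C = -1) := by
  have : Nonempty (Fin k) := ⟨⟨0, hk⟩⟩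
  have huniv : CountCondition (naeRows m) univ := fun C hC =>
    (neg_one_le_epsRestrict_iff m).1 (eps_eq_epsRestrict_univ m C ▸ h C hC)
  obtain ⟨R, -, hR, hRcount⟩ := exists_subset_card_eq_countCondition (naeRows_mono m)
    (fun _ _ => naeRows_union_subset m) huniv
  rw [Fintype.card_fin] at hR
  refine ⟨R, hR, fun C hC => (neg_one_le_epsRestrict_iff m).2 (hRcount C hC),
    {⟨0, hk⟩}, singleton_nonempty _, ?_⟩
  simp [epsRestrict, naeRows_singleton]
end

section
/- Let m be an n×k real matrix and let S, T ⊆ {1,…,n}. If the row space of H(m|_S) is strictly contained in the row space of H(m|_{S ∪ T}), then there is a single row index t ∈ T such that the row space of H(m|_S) is strictly contained in the row space of H(m|_{S ∪ {t}}). -/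
/-- `hadRow m S` is the Hadamard product of the rows of `m` indexed by `S`,
i.e. the vector with `j`-th entry `∏_{i ∈ S} m i j` (the all-ones vector for `S = ∅`). -/
noncomputable def hadRow {n k : ℕ} (m : Matrix (Fin n) (Fin k) ℝ) (S : Finset (Fin n)) :
    Fin k → ℝ :=
  fun j => ∏ i ∈ S, m i j

/-- The row space of the Hadamard extension `H(m|_R)`: the span in `ℝ^k` of the
vectors `m_S` for all `S ⊆ R`. -/
noncomputable def hextRowSpace {n k : ℕ} (m : Matrix (Fin n) (Fin k) ℝ) (R : Finset (Fin n)) :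
    Submodule ℝ (Fin k → ℝ) :=
  Submodule.span ℝ {x | ∃ S ⊆ R, x = hadRow m S}

/-!
If no single row of `T` enlarges the row space `V` of `H(m|_S)`, then for every `t ∈ T \ S` the
vectors `m_t ⊙ m_A` (`A ⊆ S`) already lie in `V`, so `V` is stable under Hadamard multiplication
by `m_t`, hence by every product `m_B` with `B ⊆ T \ S`. Splitting `A ⊆ S ∪ T` as
`m_A = m_{A \ S} ⊙ m_{A ∩ S}` then shows that every generator of `H(m|_{S ∪ T})` lies in `V`.
-/

section HadamardExtension

variable {n k : ℕ} (m : Matrix (Fin n) (Fin k) ℝ)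

theorem hadRow_eq_prod (S : Finset (Fin n)) : hadRow m S = ∏ i ∈ S, m i := by
  ext j
  exact (Finset.prod_apply j S m).symm

theorem hadRow_mem_hextRowSpace {A R : Finset (Fin n)} (h : A ⊆ R) :
    hadRow m A ∈ hextRowSpace m R :=
  Submodule.subset_span ⟨A, h, rfl⟩

theorem hextRowSpace_mono {R R' : Finset (Fin n)} (h : R ⊆ R') :
    hextRowSpace m R ≤ hextRowSpace m R' :=
  Submodule.span_mono fun _ ⟨A, hA, hx⟩ => ⟨A, hA.trans h, hx⟩

theorem row_mul_mem_hextRowSpace {S : Finset (Fin n)} {t : Fin n} (ht : t ∉ S)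
    (hle : hextRowSpace m (insert t S) ≤ hextRowSpace m S) {v : Fin k → ℝ}
    (hv : v ∈ hextRowSpace m S) : m t * v ∈ hextRowSpace m S := by
  induction hv using Submodule.span_induction with
  | mem x hx =>
    obtain ⟨A, hA, rfl⟩ := hx
    have hinsert : m t * hadRow m A = hadRow m (insert t A) := by
      rw [hadRow_eq_prod, hadRow_eq_prod]
      exact (Finset.prod_insert fun htA => ht (hA htA)).symm
    exact hle (hinsert ▸ hadRow_mem_hextRowSpace m (Finset.insert_subset_insert t hA))
  | zero => simp only [mul_zero, Submodule.zero_mem]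
  | add x y _ _ hx hy => simpa only [mul_add] using add_mem hx hy
  | smul a x _ hx => simpa only [mul_smul_comm] using Submodule.smul_mem _ a hx

theorem hextRowSpace_union_le {S T : Finset (Fin n)}
    (hT : ∀ t ∈ T, t ∉ S → hextRowSpace m (insert t S) ≤ hextRowSpace m S) :
    hextRowSpace m (S ∪ T) ≤ hextRowSpace m S := by
  refine Submodule.span_le.2 fun _ ⟨A, hA, hx⟩ => ?_
  have hsplit : hadRow m A = (∏ i ∈ A \ (A ∩ S), m i) * hadRow m (A ∩ S) := by
    rw [hadRow_eq_prod, hadRow_eq_prod]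
    exact (Finset.prod_sdiff Finset.inter_subset_left).symm
  have hrow : ∀ t ∈ A \ (A ∩ S), ∀ v ∈ hextRowSpace m S, m t * v ∈ hextRowSpace m S := by
    intro t ht v hv
    obtain ⟨htA, htAS⟩ := Finset.mem_sdiff.1 ht
    have htS : t ∉ S := fun htS => htAS (Finset.mem_inter.2 ⟨htA, htS⟩)
    have htT : t ∈ T := (Finset.mem_union.1 (hA htA)).resolve_left htS
    exact row_mul_mem_hextRowSpace m htS (hT t htT htS) hv
  rw [SetLike.mem_coe, hx, hsplit]
  exact Finset.prod_induction _ (fun x => ∀ v ∈ hextRowSpace m S, x * v ∈ hextRowSpace m S)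
    (fun a b ha hb v hv => mul_assoc a b v ▸ ha _ (hb v hv)) (fun v hv => (one_mul v).symm ▸ hv)
    hrow _ (hadRow_mem_hextRowSpace m Finset.inter_subset_right)

end HadamardExtension

/-- If the row space of `H(m|_S)` is strictly contained in the row space of `H(m|_{S ∪ T})`,
then there is a single row index `t ∈ T` such that the row space of `H(m|_S)` is strictly
contained in the row space of `H(m|_{S ∪ {t}})`. -/
theorem rowSpace_strict_mono_single_row {n k : ℕ} (m : Matrix (Fin n) (Fin k) ℝ)
    (S T : Finset (Fin n))
    (h : hextRowSpace m S < hextRowSpace m (S ∪ T)) :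
    ∃ t ∈ T, hextRowSpace m S < hextRowSpace m (S ∪ {t}) := by
  by_contra! hc
  refine h.not_ge (hextRowSpace_union_le m fun t ht _ => ?_)
  rw [← Finset.union_singleton]
  exact ((hextRowSpace_mono m Finset.subset_union_left).lt_or_eq.resolve_left (hc t ht)).ge
end

section
/- Let m be an n×k real matrix. Then H(m) has full column rank if and only if there exists a set R of at most k−1 rows of m such that H(m|_R) has full column rank. -/
/-!
Let `K(R) ⊆ ℝᵏ` be the kernel of `H(m|_R)`; it shrinks as `R` grows. Adding rows greedily while
`K(R)` strictly shrinks, each added row lowers `dim K(R)` by at least one, and `dim K(∅) ≤ k - 1`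
because the row of `∅` is the all-ones vector. When no single row shrinks `K(R)` any more, `K(R)`
is closed under Hadamard multiplication by every row `mᵢ` with `i ∉ R`, and hence equals the
kernel of the whole of `H(m)`, since the row of `S` is the product of the row of `S ∩ R` with the
rows `mᵢ`, `i ∈ S \ R`.
-/

open Matrix Module

theorem Matrix.linearIndependent_transpose_iff_ker_mulVecLin_eq_bot {ι κ R : Type*}
    [Fintype κ] [CommRing R] {M : Matrix ι κ R} :
    LinearIndependent R Mᵀ ↔ LinearMap.ker M.mulVecLin = ⊥ :=
  mulVec_injective_iff.symm.trans (LinearMap.ker_eq_bot (f := M.mulVecLin)).symm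

theorem Matrix.mul_dotProduct_eq_dotProduct_mul {ι R : Type*} [Fintype ι] [CommSemiring R]
    (u v w : ι → R) : (u * v) ⬝ᵥ w = v ⬝ᵥ (u * w) :=
  Finset.sum_congr rfl fun _ _ => by simp only [Pi.mul_apply]; ring

theorem Antitone.exists_card_add_finrank_le_of_insert_eq {α F V : Type*} [DecidableEq α]
    [Field F] [AddCommGroup V] [Module F V] [FiniteDimensional F V]
    {K : Finset α → Submodule F V} (hK : Antitone K) (R₀ : Finset α) :
    ∃ R : Finset α, R.card + finrank F (K R) ≤ R₀.card + finrank F (K R₀) ∧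
      ∀ i, K (insert i R) = K R := by
  induction h : finrank F (K R₀) using Nat.strong_induction_on generalizing R₀ with
  | _ d ih =>
  by_cases hstable : ∀ i, K (insert i R₀) = K R₀
  · exact ⟨R₀, h ▸ le_rfl, hstable⟩
  obtain ⟨i, hi⟩ := not_forall.mp hstable
  have hlt : finrank F (K (insert i R₀)) < d :=
    h ▸ Submodule.finrank_lt_finrank_of_lt ((hK (R₀.subset_insert i)).lt_of_ne hi)
  obtain ⟨R, hR, hRstable⟩ := ih _ hlt (insert i R₀) rfl
  exact ⟨R, by have := R₀.card_insert_le i; omega, hRstable⟩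

namespace Hext

variable {n k : ℕ} {m : Matrix (Fin n) (Fin k) ℝ}

theorem hext_empty : hext m ∅ = 1 :=
  funext fun _ => Finset.prod_empty

theorem hext_union {S T : Finset (Fin n)} (h : Disjoint S T) :
    hext m (S ∪ T) = hext m S * hext m T :=
  funext fun _ => Finset.prod_union h

theorem hext_insert {i : Fin n} {S : Finset (Fin n)} (hi : i ∉ S) :
    hext m (insert i S) = m i * hext m S :=
  funext fun _ => Finset.prod_insert hi

noncomputable def ker (m : Matrix (Fin n) (Fin k) ℝ) (R : Finset (Fin n)) :
    Submodule ℝ (Fin k → ℝ) :=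
  LinearMap.ker (hextRestrict m R).mulVecLin

theorem mem_ker {R : Finset (Fin n)} {c : Fin k → ℝ} :
    c ∈ ker m R ↔ ∀ S ⊆ R, hext m S ⬝ᵥ c = 0 := by
  simp only [ker, LinearMap.mem_ker, mulVecLin_apply, funext_iff, Subtype.forall]
  rfl

theorem ker_antitone : Antitone (ker m) :=
  fun _ _ hRR' _ hc => mem_ker.2 fun S hS => mem_ker.1 hc S (hS.trans hRR')

theorem ker_hext_le_ker (R : Finset (Fin n)) : LinearMap.ker (hext m).mulVecLin ≤ ker m R :=
  fun _ hc => mem_ker.2 fun S _ => congrFun hc S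

theorem mul_mem_ker {R : Finset (Fin n)} {i : Fin n} (hi : i ∉ R)
    (hstable : ker m (insert i R) = ker m R) {c : Fin k → ℝ} (hc : c ∈ ker m R) :
    m i * c ∈ ker m R := by
  refine mem_ker.2 fun S hS => ?_
  rw [← mul_dotProduct_eq_dotProduct_mul, ← hext_insert fun hiS => hi (hS hiS)]
  exact mem_ker.1 (hstable ▸ hc) _ (Finset.insert_subset_insert i hS)

theorem hext_mul_mem_ker {R : Finset (Fin n)} (hstable : ∀ i, ker m (insert i R) = ker m R)
    {T : Finset (Fin n)} (hT : Disjoint T R) {c : Fin k → ℝ} (hc : c ∈ ker m R) :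
    hext m T * c ∈ ker m R := by
  induction T using Finset.induction_on with
  | empty => rwa [hext_empty, one_mul]
  | insert i T hiT ih =>
    rw [Finset.disjoint_insert_left] at hT
    rw [hext_insert hiT, mul_assoc]
    exact mul_mem_ker hT.1 (hstable i) (ih hT.2)

theorem ker_le_ker_hext {R : Finset (Fin n)} (hstable : ∀ i, ker m (insert i R) = ker m R) :
    ker m R ≤ LinearMap.ker (hext m).mulVecLin := by
  intro c hc
  ext S
  have hsplit : hext m S = hext m (S \ R) * hext m (S ∩ R) := by
    rw [← hext_union (Finset.disjoint_sdiff_inter S R), Finset.sdiff_union_inter]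
  change hext m S ⬝ᵥ c = 0
  rw [hsplit, mul_dotProduct_eq_dotProduct_mul]
  exact mem_ker.1 (hext_mul_mem_ker hstable Finset.sdiff_disjoint hc) _ Finset.inter_subset_right

theorem finrank_ker_empty_le : finrank ℝ (ker m ∅) ≤ k - 1 := by
  rcases Nat.eq_zero_or_pos k with rfl | hk
  · simpa using Submodule.finrank_le (ker m ∅)
  have hne : ker m ∅ ≠ ⊤ := fun htop => by
    have := mem_ker.1 (htop ▸ Submodule.mem_top : Pi.single ⟨0, hk⟩ 1 ∈ ker m ∅) ∅ subset_rfl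
    simp [hext_empty, dotProduct_single] at this
  have := Submodule.finrank_lt hne
  rw [finrank_fin_fun] at this
  omega

end Hext

/-- `H(m)` has full column rank if and only if there exists a set `R` of at most `k - 1`
rows of `m` such that `H(m|_R)` has full column rank. -/
theorem hext_fullColRank_iff_restrict {n k : ℕ} (m : Matrix (Fin n) (Fin k) ℝ) :
    LinearIndependent ℝ (hext m)ᵀ ↔
      ∃ R : Finset (Fin n), R.card ≤ k - 1 ∧
        LinearIndependent ℝ (hextRestrict m R)ᵀ := by
  simp only [linearIndependent_transpose_iff_ker_mulVecLin_eq_bot]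
  constructor
  · intro hbot
    obtain ⟨R, hcard, hstable⟩ := Hext.ker_antitone.exists_card_add_finrank_le_of_insert_eq ∅
    have hR : Hext.ker m R = ⊥ := eq_bot_iff.2 (hbot ▸ Hext.ker_le_ker_hext hstable)
    have := Hext.finrank_ker_empty_le (m := m)
    rw [hR, finrank_bot, Finset.card_empty] at hcard
    exact ⟨R, by omega, hR⟩
  · rintro ⟨R, -, hR⟩
    exact eq_bot_iff.2 (hR ▸ Hext.ker_hext_le_ker R)
end

section
/- Let k ≥ 1 and n = ⌈log₂ k⌉. Then the set of n×k real matrices m for which the Hadamard extension H(m) does not have full column rank has Lebesgue measure zero in ℝ^{n×k}. In particular, almost all ⌈log₂ k⌉ × k real matrices m have H(m) of full column rank. -/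
open MeasureTheory

/-!
Order the subsets of `Fin n` colexicographically and take the first `k` of them,
`s 0 < ⋯ < s (k - 1)` (possible as `k ≤ 2 ^ n`); colex order refines inclusion. The determinant of
the `k × k` minor of `H(m)` on the rows `s i` is a polynomial in the entries of `m`. At the 0/1
matrix `m l j = [l ∈ s j]` that minor is `[s i ⊆ s j]`, which is upper unitriangular, so the
polynomial is nonzero, and the zero set of a nonzero real polynomial is Lebesgue-null: by Fubini,
for almost every value of the other coordinates the first one ranges over finitely many roots.
-/

theorem Finset.exists_fin_family_le_of_subset {ι : Type*} [LinearOrder ι] [Fintype ι] {k : ℕ}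
    (hk : k ≤ 2 ^ Fintype.card ι) : ∃ s : Fin k → Finset ι, ∀ i j, s i ⊆ s j → i ≤ j := by
  let _ : Fintype (Colex (Finset ι)) := inferInstanceAs (Fintype (Finset ι))
  let e := Fintype.orderIsoFinOfCardEq (Colex (Finset ι)) (Fintype.card_finset (α := ι))
  refine ⟨fun i => ofColex (e (Fin.castLE hk i)), fun i j hij => ?_⟩
  simpa using Finset.Colex.toColex_le_toColex_of_subset hij

namespace MvPolynomial

theorem measurableSet_setOf_eval_eq_zero {σ : Type*} [Countable σ] (p : MvPolynomial σ ℝ) :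
    MeasurableSet {x : σ → ℝ | eval x p = 0} :=
  measurableSet_eq_fun (continuous_eval p).measurable measurable_const

theorem finite_setOf_eval_cons_eq_zero {R : Type*} [CommRing R] [IsDomain R] {N : ℕ}
    {p : MvPolynomial (Fin (N + 1)) R} {y : Fin N → R}
    (hy : eval y (finSuccEquiv R N p).leadingCoeff ≠ 0) :
    {a : R | eval (Fin.cons a y) p = 0}.Finite := by
  have hmap : (finSuccEquiv R N p).map (eval y) ≠ 0 := by
    rwa [← Polynomial.leadingCoeff_ne_zero,
      Polynomial.leadingCoeff_map_of_leadingCoeff_ne_zero _ hy]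
  simpa only [eval_eq_eval_mv_eval', Polynomial.IsRoot.def] using
    Polynomial.finite_setOfPred_isRoot hmap

theorem volume_setOf_eval_eq_zero_fin :
    ∀ {N : ℕ} {p : MvPolynomial (Fin N) ℝ}, p ≠ 0 → volume {x | eval x p = 0} = 0
  | 0, p, hp => by
    rw [eq_C_of_isEmpty p] at hp ⊢
    simp [C_eq_zero.not.1 hp]
  | N + 1, p, hp => by
    have hlc : ∀ᵐ y : Fin N → ℝ, eval y (finSuccEquiv ℝ N p).leadingCoeff ≠ 0 := by
      refine ae_iff.2 ?_
      simpa using volume_setOf_eval_eq_zero_fin (Polynomial.leadingCoeff_ne_zero.2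
        (EmbeddingLike.map_ne_zero_iff.2 hp))
    have he := (volume_preserving_piFinSuccAbove (fun _ : Fin (N + 1) => ℝ) 0).symm
    rw [← he.measure_preimage_equiv, Measure.volume_eq_prod,
      Measure.prod_apply_symm ((measurableSet_setOf_eval_eq_zero p).preimage he.measurable)]
    refine (lintegral_congr_ae (hlc.mono fun y hy => ?_)).trans lintegral_zero
    refine Set.Finite.measure_zero ?_ _
    convert finite_setOf_eval_cons_eq_zero hy using 1
    ext a
    simp [MeasurableEquiv.piFinSuccAbove_symm_apply]
    rfl

theorem volume_setOf_eval_eq_zero {σ : Type*} [Fintype σ] {p : MvPolynomial σ ℝ} (hp : p ≠ 0) :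
    volume {x : σ → ℝ | eval x p = 0} = 0 := by
  let e := Fintype.equivFin σ
  have he := volume_measurePreserving_piCongrLeft (fun _ : σ => ℝ) e.symm
  rw [← he.measure_preimage_equiv]
  convert volume_setOf_eval_eq_zero_fin ((rename_injective e e.injective).ne hp) using 2
  ext y
  have hy : Equiv.piCongrLeft (fun _ => ℝ) e.symm y = y ∘ e := by
    ext s
    simpa using Equiv.piCongrLeft_apply_apply (P := fun _ => ℝ) e.symm y (e s)
  simp [eval_rename, MeasurableEquiv.coe_piCongrLeft, hy]

end MvPolynomial

theorem MeasureTheory.volume_measurePreserving_uncurry (ι κ α : Type*) [Fintype ι] [Fintype κ]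
    [MeasureSpace α] [SigmaFinite (volume : Measure α)] :
    MeasurePreserving (MeasurableEquiv.curry ι κ α).symm volume volume := by
  refine ⟨(MeasurableEquiv.curry ι κ α).symm.measurable, ?_⟩
  refine (Measure.pi_eq fun s hs => ?_).symm
  rw [MeasurableEquiv.map_apply]
  have hpre : (MeasurableEquiv.curry ι κ α).symm ⁻¹' Set.univ.pi s =
      Set.univ.pi fun i => Set.univ.pi fun j => s (i, j) := by
    ext m
    simp [Set.mem_pi, Prod.forall]
  rw [hpre, volume_pi_pi, Fintype.prod_prod_type]
  exact Finset.prod_congr rfl fun i _ => volume_pi_pi _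

section HadamardExtension

variable {R ι κ : Type*}

def hadamardExtension [CommMonoid R] (m : ι → κ → R) : Matrix (Finset ι) κ R :=
  Matrix.of fun S j => ∏ i ∈ S, m i j

theorem hadamardExtension_map [CommMonoid R] {S F : Type*} [CommMonoid S] [FunLike F R S]
    [MonoidHomClass F R S] (f : F) (m : ι → κ → R) :
    (hadamardExtension m).map f = hadamardExtension fun i j => f (m i j) := by
  ext
  simp [hadamardExtension]

theorem hadamardExtension_indicator [CommMonoidWithZero R] [DecidableEq ι] (s : κ → Finset ι)
    (S : Finset ι) (j : κ) : hadamardExtension (fun i j => if i ∈ s j then (1 : R) else 0) S j =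
      if S ⊆ s j then 1 else 0 := by
  simp [hadamardExtension, Finset.prod_boole, Finset.subset_iff]

theorem det_submatrix_hadamardExtension_indicator [CommRing R] [DecidableEq ι] [Fintype κ]
    [LinearOrder κ] {s : κ → Finset ι} (hs : ∀ i j, s i ⊆ s j → i ≤ j) :
    ((hadamardExtension fun i j => if i ∈ s j then (1 : R) else 0).submatrix s id).det = 1 := by
  rw [Matrix.det_of_isUpperTriangular]
  · simp [hadamardExtension_indicator]
  · intro i j hji
    simp only [Matrix.submatrix_apply, id, hadamardExtension_indicator]
    exact if_neg fun h => (hs i j h).not_gt hji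

theorem linearIndependent_col_of_isUnit_submatrix {K : Type*} [Field K] [Fintype κ]
    [DecidableEq κ] {A : Matrix ι κ K} (s : κ → ι) (h : IsUnit (A.submatrix s id)) :
    LinearIndependent K A.col :=
  LinearIndependent.of_comp (LinearMap.funLeft K K s)
    (Matrix.linearIndependent_cols_iff_isUnit.2 h)

end HadamardExtension

namespace MvPolynomial

variable (R : Type*) {ι κ : Type*} [CommRing R] [Fintype κ]

noncomputable def hadamardMinorDet [DecidableEq κ] (s : κ → Finset ι) : MvPolynomial (ι × κ) R :=
  ((hadamardExtension fun i j => X (i, j)).submatrix s id).det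

variable {R}

theorem eval_hadamardMinorDet [DecidableEq κ] (s : κ → Finset ι) (m : ι → κ → R) :
    eval (Function.uncurry m) (hadamardMinorDet R s) =
      ((hadamardExtension m).submatrix s id).det := by
  rw [hadamardMinorDet, RingHom.map_det, RingHom.mapMatrix_apply, ← Matrix.submatrix_map,
    hadamardExtension_map]
  simp

theorem hadamardMinorDet_ne_zero [Nontrivial R] [DecidableEq ι] [LinearOrder κ]
    {s : κ → Finset ι} (hs : ∀ i j, s i ⊆ s j → i ≤ j) : hadamardMinorDet R s ≠ 0 := by
  intro h
  have := congrArg (eval (Function.uncurry fun i j => if i ∈ s j then (1 : R) else 0)) h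
  rw [eval_hadamardMinorDet, map_zero] at this
  exact one_ne_zero ((det_submatrix_hadamardExtension_indicator hs).symm.trans this)

end MvPolynomial

theorem hext_fullColRank_ae_general (k : ℕ) :
    volume {m : Fin (Nat.clog 2 k) → Fin k → ℝ |
      ¬ LinearIndependent ℝ
        (fun j : Fin k => fun S : Finset (Fin (Nat.clog 2 k)) => ∏ i ∈ S, m i j)} = 0 := by
  obtain ⟨s, hs⟩ := Finset.exists_fin_family_le_of_subset (ι := Fin (Nat.clog 2 k))
    (by simpa using Nat.le_pow_clog one_lt_two k)
  let P := MvPolynomial.hadamardMinorDet ℝ s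
  refine measure_mono_null
    (t := (MeasurableEquiv.curry _ _ ℝ).symm ⁻¹' {x | MvPolynomial.eval x P = 0}) ?_ ?_
  · intro m hm
    by_contra hP
    refine hm (linearIndependent_col_of_isUnit_submatrix (A := hadamardExtension m) s ?_)
    rw [Matrix.isUnit_iff_isUnit_det, isUnit_iff_ne_zero]
    simpa [P, MeasurableEquiv.coe_curry_symm, MvPolynomial.eval_hadamardMinorDet] using hP
  · rw [(volume_measurePreserving_uncurry _ _ ℝ).measure_preimage_equiv]
    exact MvPolynomial.volume_setOf_eval_eq_zero (MvPolynomial.hadamardMinorDet_ne_zero hs)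

/-- Let `k ≥ 1` and `n = ⌈log₂ k⌉`. The set of `n × k` real matrices `m` (identified with
`ℝ^{n×k}` carrying Lebesgue measure) for which the Hadamard extension `H(m)` does not
have full column rank (i.e. the columns `j ↦ (S ↦ ∏_{i ∈ S} m i j)` are not linearly
independent) has Lebesgue measure zero. -/
theorem hext_fullColRank_ae (k : ℕ) (hk : 1 ≤ k) :
    volume {m : Fin (Nat.clog 2 k) → Fin k → ℝ |
      ¬ LinearIndependent ℝ
        (fun j : Fin k => fun S : Finset (Fin (Nat.clog 2 k)) => ∏ i ∈ S, m i j)} = 0 :=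
  hext_fullColRank_ae_general k
end

section
/- Let m be an n×k real matrix with k ≥ 3. If there is a set C of three columns such that at most one row of m is nonconstant on the columns in C, then the row space of H(m|^C) (the restriction of H(m) to the columns in C) has dimension at most 2, and consequently H(m) does not have full column rank. -/
open Matrix
open scoped Classical

/-!
Outside the set `N` of rows of `m` that are nonconstant on `C`, every factor of
`∏ i ∈ S, m i j` is independent of `j ∈ C`, so on `C` the row `S` of `H(m)` is a scalar
multiple of its row `S ∩ N`. When `N` has at most one element, `S ∩ N` is `∅` or `N`, so the
rows of `H(m)|^C` lie in a plane of `ℝ^C`; as row rank equals column rank, the three columns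
of `H(m)` indexed by `C` are then linearly dependent.
-/

open Module Submodule

theorem Matrix.not_linearIndependent_transpose_of_finrank_span_rows_lt {ι κ K : Type*} [Field K]
    [Finite ι] (A : Matrix ι κ K) (s : Finset κ)
    (h : finrank K (span K (Set.range fun i (j : s) => A i j)) < s.card) :
    ¬ LinearIndependent K Aᵀ := by
  intro hA
  have hcols : LinearIndependent K (A.submatrix id ((↑) : s → κ)).col :=
    hA.comp _ Subtype.val_injective
  have hrank := (A.submatrix id ((↑) : s → κ)).rank_eq_finrank_span_row
  rw [rank_eq_finrank_span_cols, finrank_span_eq_card hcols, Fintype.card_coe] at hrank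
  exact h.ne' hrank

theorem finrank_span_le_two_of_subset_span_pair {K V : Type*} [DivisionRing K] [AddCommGroup V]
    [Module K V] {s : Set V} {u v : V} (h : s ⊆ span K {u, v}) : finrank K (span K s) ≤ 2 := by
  have : FiniteDimensional K (span K ({u, v} : Set V)) := .span_of_finite K (by simp)
  calc finrank K (span K s)
      ≤ finrank K (span K ({u, v} : Set V)) := finrank_mono (span_le.mpr h)
    _ ≤ 2 := by
      rw [← Finset.coe_pair]
      exact (finrank_span_finset_le_card _).trans Finset.card_le_two

theorem Finset.inter_eq_empty_or_eq_of_card_le_one {α : Type*} [DecidableEq α] {t : Finset α}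
    (ht : t.card ≤ 1) (s : Finset α) : s ∩ t = ∅ ∨ s ∩ t = t :=
  (s ∩ t).eq_empty_or_nonempty.imp_right fun hne =>
    Finset.eq_of_subset_of_card_le Finset.inter_subset_right (ht.trans hne.card_pos)

section hext

variable {n k : ℕ} (m : Matrix (Fin n) (Fin k) ℝ) (C : Finset (Fin k))

theorem eq_of_notMem_naeRows {i : Fin n} (hi : i ∉ naeRows m C) {j j' : Fin k} (hj : j ∈ C)
    (hj' : j' ∈ C) : m i j = m i j' := by
  by_contra hne
  exact hi (Finset.mem_filter.mpr ⟨Finset.mem_univ i, j, hj, j', hj', hne⟩)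

theorem hext_eq_hext_inter_naeRows_mul {j₀ j : Fin k} (hj₀ : j₀ ∈ C) (hj : j ∈ C)
    (S : Finset (Fin n)) :
    hext m S j = hext m (S ∩ naeRows m C) j * hext m (S \ naeRows m C) j₀ := by
  rw [hext, hext, hext, ← Finset.prod_inter_mul_prod_sdiff S (naeRows m C)]
  exact congrArg _ (Finset.prod_congr rfl fun i hi =>
    eq_of_notMem_naeRows m C (Finset.mem_sdiff.mp hi).2 hj hj₀)

theorem hext_rows_subset_span_pair (h1 : (naeRows m C).card ≤ 1) (hC : C.Nonempty) :
    (Set.range fun S (j : C) => hext m S j) ⊆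
      span ℝ {fun j : C => hext m ∅ j, fun j : C => hext m (naeRows m C) j} := by
  obtain ⟨j₀, hj₀⟩ := hC
  rintro _ ⟨S, rfl⟩
  have hrow : (fun j : C => hext m S j) =
      hext m (S \ naeRows m C) j₀ • fun j : C => hext m (S ∩ naeRows m C) j := by
    ext j
    rw [hext_eq_hext_inter_naeRows_mul m C hj₀ j.2, Pi.smul_apply, smul_eq_mul, mul_comm]
  dsimp only
  rw [hrow]
  refine smul_mem _ _ (subset_span ?_)
  rcases Finset.inter_eq_empty_or_eq_of_card_le_one h1 S with h | h <;> simp [h]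

end hext

theorem hext_three_columns_one_nonconstant_row_general {n k : ℕ}
    (m : Matrix (Fin n) (Fin k) ℝ) (C : Finset (Fin k)) (hC : C.card = 3)
    (h1 : (naeRows m C).card ≤ 1) :
    Module.finrank ℝ
        ↥(Submodule.span ℝ
          (Set.range fun S : Finset (Fin n) => fun j : {j // j ∈ C} => hext m S j.1)) ≤ 2 ∧
      ¬ LinearIndependent ℝ (hext m)ᵀ := by
  have hrows := finrank_span_le_two_of_subset_span_pair
    (hext_rows_subset_span_pair m C h1 (Finset.card_pos.mp (by omega)))
  exact ⟨hrows, (hext m).not_linearIndependent_transpose_of_finrank_span_rows_lt C (by omega)⟩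

/-- Let `m` be an `n × k` matrix with `k ≥ 3`. If there is a set `C` of three columns such
that at most one row of `m` is nonconstant on the columns in `C`, then the row space of
`H(m)|^C` (the restriction of `H(m)` to the columns in `C`) has dimension at most `2`, and
consequently `H(m)` does not have full column rank. -/
theorem hext_three_columns_one_nonconstant_row {n k : ℕ} (hk : 3 ≤ k)
    (m : Matrix (Fin n) (Fin k) ℝ) (C : Finset (Fin k)) (hC : C.card = 3)
    (h1 : (naeRows m C).card ≤ 1) :
    Module.finrank ℝ
        ↥(Submodule.span ℝ
          (Set.range fun S : Finset (Fin n) => fun j : {j // j ∈ C} => hext m S j.1)) ≤ 2 ∧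
      ¬ LinearIndependent ℝ (hext m)ᵀ :=
  hext_three_columns_one_nonconstant_row_general m C hC h1
end

section
/- There exists a matrix m with k = 4 columns such that the Hadamard extension H(m) has full column rank but m does not satisfy the NAE condition (i.e., ε̄(m) < −1). For example, the 2×4 matrix with rows (1, −1, 1, −1) and (1, 1, −1, −1) has H(m) of full column rank while ε̄(m) = −2. Hence for k > 3 the NAE condition is not necessary for H(m) to have full column rank. -/
open Matrix
open scoped Classical

/-!
The Gram matrix of `H(m)` has entries `∑_S ∏_{i ∈ S} m_i^j m_i^{j'} = ∏_i (1 + m_i^j m_i^{j'})`.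
For a `±1` matrix with distinct columns every off-diagonal entry has a vanishing factor, so the
columns of `H(m)` are orthogonal and `H(m)` has full column rank. On the other hand, if every row
takes each of its values in at most `t` columns, then no row is constant on a set of more than `t`
columns, so `ε(m|^C) = n - |C|` as soon as `|C| > t`. The matrix whose four columns are the four
sign vectors of length two has `t = 2`, and `C` = all columns gives `ε = 2 - 4 = -2`.
-/

open Finset

theorem Matrix.mulVec_injective_of_isUnit_transpose_mul_self {ι κ R : Type*} [CommRing R]
    [Fintype ι] [Fintype κ] [DecidableEq κ] {A : Matrix ι κ R} (h : IsUnit (Aᵀ * A)) :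
    Function.Injective A.mulVec := by
  refine Function.Injective.of_comp (f := Aᵀ.mulVec) ?_
  simpa only [Function.comp_def, mulVec_mulVec] using mulVec_injective_of_isUnit h

section

variable {n k : ℕ}

theorem transpose_hext_mul_hext_apply (m : Matrix (Fin n) (Fin k) ℝ) (j j' : Fin k) :
    ((hext m)ᵀ * hext m) j j' = ∏ i, (1 + m i j * m i j') := by
  rw [prod_one_add, powerset_univ]
  simp only [mul_apply, transpose_apply, hext, prod_mul_distrib]

theorem transpose_hext_mul_hext_of_sign {m : Matrix (Fin n) (Fin k) ℝ}
    (hm : ∀ i j, m i j = 1 ∨ m i j = -1) (hcols : Function.Injective mᵀ) :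
    (hext m)ᵀ * hext m = diagonal fun _ => 2 ^ n := by
  ext j j'
  rw [transpose_hext_mul_hext_apply, diagonal_apply]
  split_ifs with hjj'
  · subst hjj'
    have hsq (i) : 1 + m i j * m i j = 2 := by rcases hm i j with h | h <;> norm_num [h]
    simp only [hsq, prod_const, card_univ, Fintype.card_fin]
  · obtain ⟨i, hi⟩ : ∃ i, m i j ≠ m i j' := by
      by_contra! h
      exact hjj' (hcols (funext h))
    refine prod_eq_zero (mem_univ i) ?_
    rcases hm i j with h | h <;> rcases hm i j' with h' | h' <;> simp_all

theorem linearIndependent_transpose_hext_of_sign {m : Matrix (Fin n) (Fin k) ℝ}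
    (hm : ∀ i j, m i j = 1 ∨ m i j = -1) (hcols : Function.Injective mᵀ) :
    LinearIndependent ℝ (hext m)ᵀ := by
  refine mulVec_injective_iff.mp (mulVec_injective_of_isUnit_transpose_mul_self ?_)
  rw [transpose_hext_mul_hext_of_sign hm hcols, isUnit_diagonal]
  exact Pi.isUnit_iff.mpr fun _ => (pow_ne_zero n two_ne_zero).isUnit

variable {m : Matrix (Fin n) (Fin k) ℝ} {t : ℕ}

theorem naeRows_eq_univ_of_fiber_card_le (hfib : ∀ i j, #{j' | m i j' = m i j} ≤ t)
    {C : Finset (Fin k)} (hC : t < #C) : naeRows m C = univ := by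
  refine eq_univ_of_forall fun i => mem_filter.mpr ⟨mem_univ i, ?_⟩
  by_contra! hconst
  obtain ⟨j, hj⟩ := card_pos.mp (t.zero_le.trans_lt hC)
  have hsub : C ⊆ ({j' | m i j' = m i j} : Finset _) := fun j' hj' =>
    mem_filter.mpr ⟨mem_univ j', hconst j' hj' j hj⟩
  exact (card_le_card hsub).trans (hfib i j) |>.not_gt hC

theorem eps_eq_of_fiber_card_le (hfib : ∀ i j, #{j' | m i j' = m i j} ≤ t)
    {C : Finset (Fin k)} (hC : t < #C) : eps m C = n - #C := by
  rw [eps, naeRows_eq_univ_of_fiber_card_le hfib hC, card_univ, Fintype.card_fin]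

theorem min_le_eps_of_fiber_card_le (hfib : ∀ i j, #{j' | m i j' = m i j} ≤ t)
    (C : Finset (Fin k)) : min (-t : ℤ) (n - k) ≤ eps m C := by
  have hCk : #C ≤ k := by simpa using card_le_univ C
  by_cases hC : t < #C
  · rw [eps_eq_of_fiber_card_le hfib hC]
    omega
  · rw [eps]
    omega

end

noncomputable def allSignColumns : Matrix (Fin 2) (Fin 4) ℝ :=
  Matrix.of ![![1, -1, 1, -1], ![1, 1, -1, -1]]

theorem allSignColumns_sign (i j) : allSignColumns i j = 1 ∨ allSignColumns i j = -1 := by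
  fin_cases i <;> fin_cases j <;> simp [allSignColumns]

theorem allSignColumns_transpose_injective : Function.Injective allSignColumnsᵀ := by
  intro j j' h
  have h0 := congrFun h 0
  have h1 := congrFun h 1
  revert h0 h1
  fin_cases j <;> fin_cases j' <;> norm_num [allSignColumns]

theorem allSignColumns_fiber_card_le (i j) :
    #{j' | allSignColumns i j' = allSignColumns i j} ≤ 2 := by
  rw [card_filter, Fin.sum_univ_four]
  fin_cases i <;> fin_cases j <;>
    norm_num [allSignColumns, cons_val_two, cons_val_three, vecHead, vecTail]

/-- There exists a matrix `m` with `k = 4` columns such that `H(m)` has full column rank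
but `m` does not satisfy the NAE condition; indeed the `2 × 4` matrix with rows
`(1, -1, 1, -1)` and `(1, 1, -1, -1)` has `H(m)` of full column rank while `ε̄(m) = -2`
(so `ε̄(m) < -1`). Hence for `k > 3` the NAE condition is not necessary for `H(m)` to
have full column rank. -/
theorem nae_not_necessary_for_fullColRank :
    ∃ m : Matrix (Fin 2) (Fin 4) ℝ,
      m = Matrix.of ![![1, -1, 1, -1], ![1, 1, -1, -1]] ∧
      LinearIndependent ℝ (hext m)ᵀ ∧
      (∀ C : Finset (Fin 4), C.Nonempty → -2 ≤ eps m C) ∧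
      (∃ C : Finset (Fin 4), C.Nonempty ∧ eps m C = -2) ∧
      ¬ (∀ C : Finset (Fin 4), C.Nonempty → -1 ≤ eps m C) := by
  have heps_univ : eps allSignColumns univ = -2 := by
    rw [eps_eq_of_fiber_card_le allSignColumns_fiber_card_le (by simp)]
    simp
  refine ⟨allSignColumns, rfl,
    linearIndependent_transpose_hext_of_sign allSignColumns_sign
      allSignColumns_transpose_injective,
    fun C _ => min_le_eps_of_fiber_card_le allSignColumns_fiber_card_le C,
    ⟨univ, univ_nonempty, heps_univ⟩, fun h => ?_⟩
  have := h univ univ_nonempty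
  omega
end

section
/- Let m be an n×k real matrix and π ∈ ℝ^k a probability vector (all entries nonnegative, summing to 1) with every entry strictly positive. Define the moment map μ(m,π) ∈ ℝ^{2^{[n]}} by μ(m,π)_S = Σ_{j=1}^k π_j ∏_{i∈S} m_i^j for each S ⊆ {1,…,n}. If the Hadamard extension H(m) does not have full column rank, then there exists a probability vector π′ ≠ π with μ(m,π′) = μ(m,π); in particular μ is not injective. -/
open Matrix

/-- The moment map: `μ(m, π)_S = Σ_j π_j ∏_{i ∈ S} m i j` for each `S ⊆ {1,…,n}`. -/
noncomputable def momentMap {n k : ℕ} (m : Matrix (Fin n) (Fin k) ℝ) (π : Fin k → ℝ) :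
    Finset (Fin n) → ℝ :=
  fun S => ∑ j, π j * ∏ i ∈ S, m i j

open Filter Topology

/- A nonzero vector `g` in the kernel of `H(m)` has `∑ j, g j = 0` (the row `S = ∅` is all
ones), so moving `π` a little along `g` keeps it a probability vector with the same moments;
`π` has positive entries, so a small enough step keeps them nonnegative. -/

theorem Matrix.exists_ne_zero_mulVec_eq_zero {m n R : Type*} [Fintype n] [CommRing R]
    {M : Matrix m n R} (h : ¬ LinearIndependent R M.col) : ∃ v ≠ 0, M *ᵥ v = 0 := by
  rw [← mulVec_injective_iff] at h
  change ¬ Function.Injective M.mulVecLin at h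
  rw [injective_iff_map_eq_zero] at h
  push Not at h
  exact h.imp fun _ ⟨hv, hv0⟩ => ⟨hv0, hv⟩

theorem exists_pos_forall_pos_add_mul {ι : Type*} [Finite ι] {π : ι → ℝ}
    (hπ : ∀ j, 0 < π j) (g : ι → ℝ) : ∃ ε > 0, ∀ j, 0 < π j + ε * g j := by
  have hnear : ∀ᶠ t in 𝓝 (0 : ℝ), ∀ j, 0 < π j + t * g j := by
    refine eventually_all.2 fun j => ?_
    have hcont : Continuous fun t : ℝ => π j + t * g j := by fun_prop
    exact continuousAt_const.eventually_lt hcont.continuousAt (by simpa using hπ j)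
  obtain ⟨ε, hε, hε_pos⟩ :=
    ((hnear.filter_mono nhdsWithin_le_nhds).and (self_mem_nhdsWithin (s := Set.Ioi 0))).exists
  exact ⟨ε, hε_pos, hε⟩

theorem momentMap_eq_hext_mulVec {n k : ℕ} (m : Matrix (Fin n) (Fin k) ℝ) (π : Fin k → ℝ) :
    momentMap m π = hext m *ᵥ π := by
  ext S
  simp only [momentMap, mulVec, dotProduct, hext, mul_comm]

theorem hext_mulVec_empty {n k : ℕ} (m : Matrix (Fin n) (Fin k) ℝ) (v : Fin k → ℝ) :
    (hext m *ᵥ v) ∅ = ∑ j, v j := by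
  simp [mulVec, dotProduct, hext]

theorem momentMap_not_injective_of_not_fullColRank_general {n k : ℕ}
    (m : Matrix (Fin n) (Fin k) ℝ) (π : Fin k → ℝ)
    (hsum : ∑ j, π j = 1) (hpos : ∀ j, 0 < π j)
    (h : ¬ LinearIndependent ℝ (hext m)ᵀ) :
    ∃ π' : Fin k → ℝ, (∀ j, 0 ≤ π' j) ∧ (∑ j, π' j = 1) ∧ π' ≠ π ∧
      momentMap m π' = momentMap m π := by
  obtain ⟨g, hg_ne, hg⟩ := exists_ne_zero_mulVec_eq_zero h
  have hg_sum : ∑ j, g j = 0 := by rw [← hext_mulVec_empty m, hg, Pi.zero_apply]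
  obtain ⟨ε, hε, hπ'⟩ := exists_pos_forall_pos_add_mul hpos g
  refine ⟨π + ε • g, fun j => (hπ' j).le, ?_, ?_, ?_⟩
  · simp only [Pi.add_apply, Pi.smul_apply, smul_eq_mul, Finset.sum_add_distrib,
      ← Finset.mul_sum, hsum, hg_sum, mul_zero, add_zero]
  · simpa using smul_ne_zero hε.ne' hg_ne
  · rw [momentMap_eq_hext_mulVec, momentMap_eq_hext_mulVec, mulVec_add, mulVec_smul, hg,
      smul_zero, add_zero]

/-- Let `π` be a probability vector with all entries strictly positive. If the Hadamard
extension `H(m)` does not have full column rank, then there is a probability vector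
`π' ≠ π` with `μ(m, π') = μ(m, π)`; in particular the moment map is not injective. -/
theorem momentMap_not_injective_of_not_fullColRank {n k : ℕ}
    (m : Matrix (Fin n) (Fin k) ℝ) (π : Fin k → ℝ)
    (hnonneg : ∀ j, 0 ≤ π j) (hsum : ∑ j, π j = 1) (hpos : ∀ j, 0 < π j)
    (h : ¬ LinearIndependent ℝ (hext m)ᵀ) :
    ∃ π' : Fin k → ℝ, (∀ j, 0 ≤ π' j) ∧ (∑ j, π' j = 1) ∧ π' ≠ π ∧
      momentMap m π' = momentMap m π :=
  momentMap_not_injective_of_not_fullColRank_general m π hsum hpos h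
end
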